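/- arXiv:1003.5501 — 2 statements merged into one kernel-verified Lean document; each statement's English description precedes it below -/
import Mathlib

section
/- Let κ ∈ ℝ, α ∈ ℝ, and let n ≥ 0 be an integer. Then for every z ∈ ℂ with 1 + κ|z|² > 0, (∂^n/∂z̄^n)[w ↦ (1+κ|w|²)^{α+n}](z) = (α+1)_n · κ^n · z^n · (1+κ|z|²)^{α}, where (a)_n = a(a+1)⋯(a+n−1) is the Pochhammer symbol (with (a)_0 = 1). -/
open Complex MeasureTheory Filter

/-- Wirtinger derivative ∂f/∂z = (1/2)(∂f/∂x − i ∂f/∂y). -/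
noncomputable def wderiv (f : ℂ → ℂ) (z : ℂ) : ℂ :=
  (fderiv ℝ f z 1 - Complex.I * fderiv ℝ f z Complex.I) / 2

/-- Anti-holomorphic Wirtinger derivative ∂f/∂z̄ = (1/2)(∂f/∂x + i ∂f/∂y). -/
noncomputable def wderivBar (f : ℂ → ℂ) (z : ℂ) : ℂ :=
  (fderiv ℝ f z 1 + Complex.I * fderiv ℝ f z Complex.I) / 2

/-- Twisted Laplacian L_κ^ν. -/
noncomputable def twistedLap (κ ν : ℝ) (f : ℂ → ℂ) (z : ℂ) : ℂ :=
  -(((1 + κ * Complex.normSq z : ℝ) : ℂ) ^ 2 * wderiv (wderivBar f) z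
    + (ν : ℂ) * ((1 + κ * Complex.normSq z : ℝ) : ℂ) *
        (z * wderiv f z - (starRingEnd ℂ) z * wderivBar f z)
    - (ν : ℂ) ^ 2 * ((Complex.normSq z : ℝ) : ℂ) * f z)

/-- (∇_α f)(z) = −(1+κ|z|²) ∂f/∂z + α z̄ f(z). -/
noncomputable def nabla (κ α : ℝ) (f : ℂ → ℂ) (z : ℂ) : ℂ :=
  -((1 + κ * Complex.normSq z : ℝ) : ℂ) * wderiv f z + (α : ℂ) * (starRingEnd ℂ) z * f z

/-- (∇*_α f)(z) = (1+κ|z|²) ∂f/∂z̄ + (α−κ) z f(z). -/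
noncomputable def nablaStar (κ α : ℝ) (f : ℂ → ℂ) (z : ℂ) : ℂ :=
  ((1 + κ * Complex.normSq z : ℝ) : ℂ) * wderivBar f z + ((α - κ : ℝ) : ℂ) * z * f z

/-- ∇_{ν+κ} ∘ ∇_{ν+2κ} ∘ ⋯ ∘ ∇_{ν+mκ} (the identity when m = 0). -/
noncomputable def nablaChain (κ : ℝ) : ℕ → ℝ → (ℂ → ℂ) → (ℂ → ℂ)
  | 0, _, f => f
  | m + 1, ν, f => nabla κ (ν + κ) (nablaChain κ m (ν + κ) f)

/-- (D g)(z) = (1+κ|z|²)² ∂g/∂z. -/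
noncomputable def Dop (κ : ℝ) (g : ℂ → ℂ) (z : ℂ) : ℂ :=
  ((1 + κ * Complex.normSq z : ℝ) : ℂ) ^ 2 * wderiv g z

/-- Generalized binomial coefficient C(r,k) for real r. -/
noncomputable def genBinom (r : ℝ) (k : ℕ) : ℝ :=
  (∏ i ∈ Finset.range k, (r - i)) / (Nat.factorial k)

/-- Jacobi polynomial P_j^{(a,b)}(x) with real parameters a, b. -/
noncomputable def jacobiP (a b : ℝ) (j : ℕ) (x : ℝ) : ℝ :=
  ∑ s ∈ Finset.range (j + 1),
    genBinom ((j : ℝ) + a) (j - s) * genBinom ((j : ℝ) + b) s *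
      ((x - 1) / 2) ^ s * ((x + 1) / 2) ^ (j - s)

/-- Pochhammer symbol (a)_n = a(a+1)⋯(a+n−1). -/
noncomputable def risingFactorial (a : ℝ) (n : ℕ) : ℝ :=
  ∏ i ∈ Finset.range n, (a + i)

/-!
On a radial function, `∂/∂z̄` acts as `∂/∂z̄ φ(|w|²) = φ'(|z|²) z`, while it kills the
holomorphic factor `w ^ k`. Hence by the Leibniz rule one application turns
`c w^k (1 + κ|w|²)^β` into `c β κ w^(k+1) (1 + κ|w|²)^(β-1)`, and `n` applications starting
from `β = α + n` produce the falling factorial `(α + n)(α + n - 1)⋯(α + 1) = (α + 1)_n`.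
-/

open scoped Topology

lemma wderivBar_congr_of_eventuallyEq {f g : ℂ → ℂ} {z : ℂ} (h : f =ᶠ[𝓝 z] g) :
    wderivBar f z = wderivBar g z := by
  rw [wderivBar, wderivBar, h.fderiv_eq]

lemma HasFDerivAt.wderivBar_eq {f : ℂ → ℂ} {f' : ℂ →L[ℝ] ℂ} {z : ℂ} (hf : HasFDerivAt f f' z) :
    wderivBar f z = (f' 1 + I * f' I) / 2 := by
  rw [wderivBar, hf.fderiv]

lemma wderivBar_mul {f g : ℂ → ℂ} {z : ℂ} (hf : DifferentiableAt ℝ f z)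
    (hg : DifferentiableAt ℝ g z) :
    wderivBar (fun w => f w * g w) z = wderivBar f z * g z + f z * wderivBar g z := by
  simp only [wderivBar, fderiv_fun_mul hf hg, add_apply, smul_apply, smul_eq_mul]
  ring

lemma DifferentiableAt.wderivBar_eq_zero {f : ℂ → ℂ} {z : ℂ} (hf : DifferentiableAt ℂ f z) :
    wderivBar f z = 0 := by
  have hI : fderiv ℂ f z I = I * fderiv ℂ f z 1 := by
    rw [← smul_eq_mul, ← map_smul, smul_eq_mul, mul_one]
  rw [(hf.hasFDerivAt.restrictScalars ℝ).wderivBar_eq, ContinuousLinearMap.coe_restrictScalars',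
    hI, ← mul_assoc, I_mul_I]
  ring

lemma hasFDerivAt_normSq (z : ℂ) : HasFDerivAt (fun w => normSq w) (2 • innerSL ℝ z) z := by
  simpa [normSq_eq_norm_sq] using (hasStrictFDerivAt_norm_sq z).hasFDerivAt

lemma hasFDerivAt_ofReal_comp_normSq {φ : ℝ → ℝ} {φ' : ℝ} {z : ℂ}
    (hφ : HasDerivAt φ φ' (normSq z)) :
    HasFDerivAt (fun w => (φ (normSq w) : ℂ)) (ofRealCLM.comp (φ' • 2 • innerSL ℝ z)) z :=
  ofRealCLM.hasFDerivAt.comp z (hφ.comp_hasFDerivAt z (hasFDerivAt_normSq z))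

lemma wderivBar_ofReal_comp_normSq {φ : ℝ → ℝ} {φ' : ℝ} {z : ℂ}
    (hφ : HasDerivAt φ φ' (normSq z)) :
    wderivBar (fun w => (φ (normSq w) : ℂ)) z = φ' * z := by
  rw [(hasFDerivAt_ofReal_comp_normSq hφ).wderivBar_eq]
  simp only [ContinuousLinearMap.comp_apply, smul_apply, coe_innerSL_apply, Complex.inner,
    ofRealCLM_apply, smul_eq_mul, nsmul_eq_mul, mul_re, conj_re, conj_im, one_re, one_im, I_re, I_im]
  push_cast
  linear_combination (φ' : ℂ) * re_add_im z

lemma hasDerivAt_one_add_mul_rpow (κ β : ℝ) {x : ℝ} (hx : 0 < 1 + κ * x) :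
    HasDerivAt (fun x => (1 + κ * x) ^ β) (κ * β * (1 + κ * x) ^ (β - 1)) x := by
  simpa using (((hasDerivAt_id x).const_mul κ).const_add 1).rpow_const (p := β) (Or.inl hx.ne')

lemma wderivBar_mul_pow_mul_rpow (κ β : ℝ) (c : ℂ) (k : ℕ) {z : ℂ}
    (hz : 0 < 1 + κ * normSq z) :
    wderivBar (fun w => c * w ^ k * (((1 + κ * normSq w) ^ β : ℝ) : ℂ)) z
      = c * ((β * κ : ℝ) : ℂ) * z ^ (k + 1) * (((1 + κ * normSq z) ^ (β - 1) : ℝ) : ℂ) := by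
  have hφ := hasDerivAt_one_add_mul_rpow κ β hz
  have hhol : DifferentiableAt ℂ (fun w : ℂ => c * w ^ k) z := by fun_prop
  rw [wderivBar_mul (hhol.restrictScalars ℝ) (hasFDerivAt_ofReal_comp_normSq hφ).differentiableAt,
    hhol.wderivBar_eq_zero, wderivBar_ofReal_comp_normSq hφ]
  push_cast
  ring

lemma iterate_wderivBar_one_add_mul_normSq_rpow (κ β : ℝ) (k : ℕ) {z : ℂ}
    (hz : 0 < 1 + κ * normSq z) :
    wderivBar^[k] (fun w => (((1 + κ * normSq w) ^ β : ℝ) : ℂ)) z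
      = (((descPochhammer ℝ k).eval β : ℝ) : ℂ) * (κ : ℂ) ^ k * z ^ k *
          (((1 + κ * normSq z) ^ (β - k) : ℝ) : ℂ) := by
  induction k generalizing z with
  | zero => simp
  | succ k ih =>
    have hopen : IsOpen {w : ℂ | 0 < 1 + κ * normSq w} :=
      isOpen_lt continuous_const (by fun_prop)
    have hnear : wderivBar^[k] (fun w => (((1 + κ * normSq w) ^ β : ℝ) : ℂ)) =ᶠ[𝓝 z]
        fun w => (((descPochhammer ℝ k).eval β : ℝ) * (κ : ℂ) ^ k) * w ^ k *
          (((1 + κ * normSq w) ^ (β - k) : ℝ) : ℂ) := by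
      filter_upwards [hopen.mem_nhds hz] with w hw
      exact ih hw
    rw [Function.iterate_succ_apply', wderivBar_congr_of_eventuallyEq hnear,
      wderivBar_mul_pow_mul_rpow κ (β - k) _ k hz, descPochhammer_succ_eval, Nat.cast_succ,
      sub_sub]
    push_cast
    ring

lemma risingFactorial_eq_ascPochhammer_eval (a : ℝ) (n : ℕ) :
    risingFactorial a n = (ascPochhammer ℝ n).eval a := by
  induction n with
  | zero => simp [risingFactorial]
  | succ n ih =>
    rw [risingFactorial, Finset.prod_range_succ, ← risingFactorial, ih, ascPochhammer_succ_eval]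

theorem stmt9 (κ α : ℝ) (n : ℕ) (z : ℂ) (hz : 0 < 1 + κ * Complex.normSq z) :
    wderivBar^[n] (fun w => (((1 + κ * Complex.normSq w) ^ (α + n) : ℝ) : ℂ)) z
      = ((risingFactorial (α + 1) n : ℝ) : ℂ) * (κ : ℂ) ^ n * z ^ n *
          (((1 + κ * Complex.normSq z) ^ α : ℝ) : ℂ) := by
  rw [iterate_wderivBar_one_add_mul_normSq_rpow κ (α + n) n hz, add_sub_cancel_right,
    descPochhammer_eval_eq_ascPochhammer, add_sub_cancel_right,
    risingFactorial_eq_ascPochhammer_eval]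
end

section
/- Let h(z) = 1 + κ|z|², let Ω = {z ∈ ℂ : h(z) > 0}, and let D be the operator (D g)(z) = h(z)² (∂g/∂z)(z). Then for every integer m ≥ 0, every function f smooth on Ω, and every z ∈ Ω, m · h(z) · κ z̄ · (D^m f)(z) + h(z) · D^m[w ↦ h(w)^{−1} (D f)(w)](z) = (D^{m+1} f)(z). (Here κ z̄ = (∂h/∂z)(z).) -/
open Complex MeasureTheory Filter

/-!
At points where `h > 0` the operator `D = h² ∂` acts on smooth functions as a derivation, and
with `a = κ z̄ h` one has `D h = a h` and `D a = a²` (because `∂ z̄ = 0`). Write `D f = h y`.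
Applying `D` to `D^{m+1} f = m a Dᵐ f + h Dᵐ y` gives
`D^{m+2} f = m (a² Dᵐ f + a D^{m+1} f) + a h Dᵐ y + h D^{m+1} y`, and eliminating `h Dᵐ y`
with the same identity yields the case `m + 1`. Since `D` only sees germs, identities on the
open set `{h > 0}` can be differentiated.
-/

open Topology
open scoped ContDiff

section Wirtinger

variable {f g : ℂ → ℂ} {z : ℂ}

theorem wderiv_congr_of_eventuallyEq (h : f =ᶠ[𝓝 z] g) : wderiv f z = wderiv g z := by
  rw [wderiv, wderiv, h.fderiv_eq]

theorem wderiv_add (hf : DifferentiableAt ℝ f z) (hg : DifferentiableAt ℝ g z) :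
    wderiv (f + g) z = wderiv f z + wderiv g z := by
  simp only [wderiv, fderiv_add hf hg, FunLike.coe_add, Pi.add_apply]
  ring

theorem wderiv_mul (hf : DifferentiableAt ℝ f z) (hg : DifferentiableAt ℝ g z) :
    wderiv (f * g) z = wderiv f z * g z + f z * wderiv g z := by
  simp only [wderiv, fderiv_mul hf hg, FunLike.coe_add, Pi.add_apply,
    FunLike.coe_smul, Pi.smul_apply, smul_eq_mul]
  ring

theorem wderiv_const_smul (c : ℂ) (hf : DifferentiableAt ℝ f z) :
    wderiv (c • f) z = c * wderiv f z := by
  simp only [wderiv, fderiv_const_smul hf, FunLike.coe_smul, Pi.smul_apply,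
    smul_eq_mul]
  ring

theorem wderiv_conj : wderiv (starRingEnd ℂ) z = 0 := by
  have : fderiv ℝ (starRingEnd ℂ) z = conjCLE.toContinuousLinearMap :=
    conjCLE.toContinuousLinearMap.fderiv
  simp [wderiv, this]

end Wirtinger

section Weight

variable (κ : ℝ)

noncomputable def weight (z : ℂ) : ℂ := ((1 + κ * Complex.normSq z : ℝ) : ℂ)

/-- `κ z̄ h(z)`, which is `D(log h)`: see `Dop_weight`. -/
noncomputable def weightDlog (z : ℂ) : ℂ := κ * starRingEnd ℂ z * weight κ z

theorem weight_eq : weight κ = fun z => 1 + κ * (z * starRingEnd ℂ z) := by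
  ext z
  simp only [weight, Complex.mul_conj]
  push_cast
  ring

theorem contDiff_weight : ContDiff ℝ ∞ (weight κ) := by
  rw [weight_eq]
  exact contDiff_const.add (contDiff_const.mul (contDiff_id.mul conjCLE.contDiff))

theorem contDiff_weightDlog : ContDiff ℝ ∞ (weightDlog κ) :=
  (contDiff_const.mul conjCLE.contDiff).mul (contDiff_weight κ)

theorem wderiv_weight (z : ℂ) : wderiv (weight κ) z = κ * starRingEnd ℂ z := by
  have hconj : DifferentiableAt ℝ (starRingEnd ℂ) z := conjCLE.differentiableAt
  have hsq : DifferentiableAt ℝ ((id : ℂ → ℂ) * ⇑(starRingEnd ℂ)) z := differentiableAt_id.mul hconj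
  have : weight κ = (fun _ => 1) + (κ : ℂ) • ((id : ℂ → ℂ) * ⇑(starRingEnd ℂ)) := by
    rw [weight_eq]; rfl
  rw [this, wderiv_add (differentiableAt_const _) (hsq.const_smul _),
    wderiv_const_smul _ hsq, wderiv_mul differentiableAt_id hconj, wderiv_conj]
  simp [wderiv]

end Weight

section Dop

variable {κ : ℝ} {u v : ℂ → ℂ} {z : ℂ}

theorem Dop_add (hu : DifferentiableAt ℝ u z) (hv : DifferentiableAt ℝ v z) :
    Dop κ (u + v) z = Dop κ u z + Dop κ v z := by
  rw [Dop, Dop, Dop, wderiv_add hu hv, mul_add]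

theorem Dop_mul (hu : DifferentiableAt ℝ u z) (hv : DifferentiableAt ℝ v z) :
    Dop κ (u * v) z = Dop κ u z * v z + u z * Dop κ v z := by
  rw [Dop, Dop, Dop, wderiv_mul hu hv]
  ring

theorem Dop_const_smul (c : ℂ) (hu : DifferentiableAt ℝ u z) :
    Dop κ (c • u) z = c * Dop κ u z := by
  rw [Dop, Dop, wderiv_const_smul c hu]
  ring

theorem Dop_weight : Dop κ (weight κ) z = weight κ z * weightDlog κ z := by
  rw [Dop, weight, wderiv_weight, weightDlog, weight]
  ring

theorem Dop_weightDlog : Dop κ (weightDlog κ) z = weightDlog κ z ^ 2 := by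
  have hconj : DifferentiableAt ℝ (starRingEnd ℂ) z := conjCLE.differentiableAt
  have : weightDlog κ = ((κ : ℂ) • starRingEnd ℂ) * weight κ := rfl
  rw [this, Dop_mul (hconj.const_smul _) ((contDiff_weight κ).differentiable (by simp) z),
    Dop_const_smul _ hconj, Dop_weight, Dop, wderiv_conj]
  simp only [Pi.smul_apply, Pi.mul_apply, smul_eq_mul, weightDlog]
  ring

theorem eqOn_Dop_of_eqOn {s : Set ℂ} (hs : IsOpen s) (h : Set.EqOn u v s) :
    Set.EqOn (Dop κ u) (Dop κ v) s := fun z hz => by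
  rw [Dop, Dop, wderiv_congr_of_eventuallyEq (Filter.eventuallyEq_of_mem (hs.mem_nhds hz) h)]

theorem contDiffOn_Dop {s : Set ℂ} (hs : IsOpen s) (hu : ContDiffOn ℝ ∞ u s) :
    ContDiffOn ℝ ∞ (Dop κ u) s := by
  have hdu : ContDiffOn ℝ ∞ (fderiv ℝ u) s := hu.fderiv_of_isOpen hs (by simp)
  have hw : ContDiffOn ℝ ∞ (wderiv u) s :=
    ((hdu.clm_apply contDiffOn_const).sub
      (contDiffOn_const.mul (hdu.clm_apply contDiffOn_const))).div_const 2
  exact ((contDiff_weight κ).pow 2).contDiffOn.mul hw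

theorem contDiffOn_iterate_Dop {s : Set ℂ} (hs : IsOpen s) (hu : ContDiffOn ℝ ∞ u s) (n : ℕ) :
    ContDiffOn ℝ ∞ ((Dop κ)^[n] u) s := by
  induction n with
  | zero => exact hu
  | succ n ih => rw [Function.iterate_succ_apply']; exact contDiffOn_Dop hs ih

end Dop

theorem isOpen_setOf_weight_pos (κ : ℝ) : IsOpen {z : ℂ | 0 < 1 + κ * Complex.normSq z} :=
  isOpen_lt continuous_const (continuous_const.add (continuous_const.mul continuous_normSq))

theorem iterate_Dop_succ_eqOn {κ : ℝ} {s : Set ℂ} (hs : IsOpen s) {f y : ℂ → ℂ}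
    (hf : ContDiffOn ℝ ∞ f s) (hy : ContDiffOn ℝ ∞ y s) (hfy : Set.EqOn (Dop κ f) (weight κ * y) s)
    (m : ℕ) :
    Set.EqOn ((Dop κ)^[m + 1] f)
      ((m : ℂ) • (weightDlog κ * (Dop κ)^[m] f) + weight κ * (Dop κ)^[m] y) s := by
  induction m with
  | zero => simpa using hfy
  | succ m ih =>
    intro z hz
    have hdiff {u : ℂ → ℂ} (hu : ContDiffOn ℝ ∞ u s) : DifferentiableAt ℝ u z :=
      (hu.contDiffAt (hs.mem_nhds hz)).differentiableAt (by simp)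
    have hh : DifferentiableAt ℝ (weight κ) z := (contDiff_weight κ).differentiable (by simp) z
    have ha : DifferentiableAt ℝ (weightDlog κ) z :=
      (contDiff_weightDlog κ).differentiable (by simp) z
    have hfm := hdiff (contDiffOn_iterate_Dop (κ := κ) hs hf m)
    have hym := hdiff (contDiffOn_iterate_Dop (κ := κ) hs hy m)
    have hD : (Dop κ)^[m + 1 + 1] f z =
        Dop κ ((m : ℂ) • (weightDlog κ * (Dop κ)^[m] f) + weight κ * (Dop κ)^[m] y) z := by
      rw [Function.iterate_succ_apply']
      exact eqOn_Dop_of_eqOn hs ih hz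
    have hIH := ih hz
    rw [hD, Dop_add ((ha.mul hfm).const_smul _) (hh.mul hym), Dop_const_smul _ (ha.mul hfm),
      Dop_mul ha hfm, Dop_mul hh hym, Dop_weightDlog, Dop_weight]
    simp only [Function.iterate_succ_apply', Pi.add_apply, Pi.smul_apply, Pi.mul_apply,
      smul_eq_mul] at hIH ⊢
    push_cast
    linear_combination (-weightDlog κ z) * hIH

theorem stmt17 (κ : ℝ) (m : ℕ) (f : ℂ → ℂ)
    (hf : ContDiffOn ℝ (⊤ : ℕ∞) f {z : ℂ | 0 < 1 + κ * Complex.normSq z})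
    (z : ℂ) (hz : 0 < 1 + κ * Complex.normSq z) :
    (m : ℂ) * ((1 + κ * Complex.normSq z : ℝ) : ℂ) * ((κ : ℂ) * (starRingEnd ℂ) z) *
          (Dop κ)^[m] f z
        + ((1 + κ * Complex.normSq z : ℝ) : ℂ) *
          (Dop κ)^[m]
            (fun w => (((1 + κ * Complex.normSq w : ℝ) : ℂ))⁻¹ * Dop κ f w) z
      = (Dop κ)^[m + 1] f z := by
  have hs := isOpen_setOf_weight_pos κ
  have hweight_ne {w : ℂ} (hw : 0 < 1 + κ * Complex.normSq w) : weight κ w ≠ 0 :=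
    Complex.ofReal_ne_zero.mpr hw.ne'
  have hy : ContDiffOn ℝ ∞ (fun w => (weight κ w)⁻¹ * Dop κ f w)
      {w : ℂ | 0 < 1 + κ * Complex.normSq w} :=
    ((contDiff_weight κ).contDiffOn.inv fun w hw => hweight_ne hw).mul (contDiffOn_Dop hs hf)
  have hfy : Set.EqOn (Dop κ f) (weight κ * fun w => (weight κ w)⁻¹ * Dop κ f w)
      {w : ℂ | 0 < 1 + κ * Complex.normSq w} :=
    fun w hw => by simp [mul_inv_cancel_left₀ (hweight_ne hw)]
  rw [iterate_Dop_succ_eqOn hs hf hy hfy m hz]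
  simp only [Pi.add_apply, Pi.smul_apply, Pi.mul_apply, smul_eq_mul, weightDlog, weight]
  ring
end
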